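/- For any normal λ-term v and derivation Π of x₁:a₁,…,x_m:a_m ⊢_R v : α in System R, the size of Π is at most the size |a₁ … a_m α| of the type a₁ … a_m α. -/
import Mathlib


/-- Untyped λ-terms with named variables. -/
inductive Lam : Type
  | var : ℕ → Lam
  | app : Lam → Lam → Lam
  | lam : ℕ → Lam → Lam
  deriving DecidableEq

namespace Lam

/-- Substitution of `s` for the variable `x`. -/
def subst : Lam → ℕ → Lam → Lam
  | var y, x, s => if y = x then s else var y
  | app v u, x, s => app (v.subst x s) (u.subst x s)
  | lam y t, x, s => if y = x then lam y t else lam y (t.subst x s)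

/-- One-step β-reduction. -/
inductive Beta : Lam → Lam → Prop
  | beta (x : ℕ) (u t : Lam) : Beta (app (lam x u) t) (u.subst x t)
  | appL {v v' : Lam} (u : Lam) : Beta v v' → Beta (app v u) (app v' u)
  | appR (v : Lam) {u u' : Lam} : Beta u u' → Beta (app v u) (app v u')
  | lam (x : ℕ) {t t' : Lam} : Beta t t' → Beta (lam x t) (lam x t')

/-- One-step head reduction. -/
inductive Head : Lam → Lam → Prop
  | beta (x : ℕ) (u t : Lam) : Head (app (lam x u) t) (u.subst x t)
  | app {v v' : Lam} (u : Lam) :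
      Head v v' → (∀ x w, v ≠ lam x w) → Head (app v u) (app v' u)
  | lam (x : ℕ) {t t' : Lam} : Head t t' → Head (lam x t) (lam x t')

/-- Terms of the shape `(x)t₁…t_p`. -/
inductive HeadApp : Lam → Prop
  | var (x : ℕ) : HeadApp (var x)
  | app {v : Lam} (u : Lam) : HeadApp v → HeadApp (app v u)

/-- Head normal forms: `λx₁…λx_m.(x)t₁…t_p`. -/
inductive HNF : Lam → Prop
  | head {t : Lam} : HeadApp t → HNF t
  | lam (x : ℕ) {t : Lam} : HNF t → HNF (lam x t)

def HeadNormalizable (t : Lam) : Prop :=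
  ∃ t', Relation.ReflTransGen Head t t' ∧ HNF t'

def Normalizable (t : Lam) : Prop :=
  ∃ t', Relation.ReflTransGen Beta t t' ∧ ∀ u, ¬ Beta t' u

/-- The multiset of binding occurrences of variables in a term. -/
def bound : Lam → Multiset ℕ
  | var _ => 0
  | app v u => v.bound + u.bound
  | lam x t => x ::ₘ t.bound

/-- `t` respects the variable convention: every variable is bound at most once. -/
def VC (t : Lam) : Prop := t.bound.Nodup

/-- Free variables. -/
def fv : Lam → Finset ℕ
  | var x => {x}
  | app v u => v.fv ∪ u.fv
  | lam x t => t.fv.erase x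

end Lam

/-! System R: non-idempotent intersection types. -/

/-- Types over the atoms `ℕ`: `D = A ⊎ (M_fin(D) × D)` (finite multisets are
represented as lists; the application rule makes derivability invariant
under permutation). -/
inductive Ty : Type
  | atom : ℕ → Ty
  | arr : List Ty → Ty → Ty

/-- Contexts: finitely supported functions from variables to finite multisets of types. -/
abbrev Ctx := ℕ →₀ Multiset Ty

mutual
  /-- Derivations of System R. -/
  inductive Deriv : Ctx → Lam → Ty → Type
    | ax (x : ℕ) (α : Ty) : Deriv (Finsupp.single x {α}) (.var x) α
    | lam {Γ : Ctx} {v : Lam} {α : Ty} (x : ℕ) (a : List Ty) :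
        Deriv (Γ + Finsupp.single x (↑a : Multiset Ty)) v α → Γ x = 0 →
        Deriv Γ (.lam x v) (.arr a α)
    | app {Γ₀ Γ₁ : Ctx} {v u : Lam} {as : List Ty} {α : Ty} :
        Deriv Γ₀ v (.arr as α) → DerivList Γ₁ u as → Deriv (Γ₀ + Γ₁) (.app v u) α
  /-- Finite families of derivations for the argument of an application. -/
  inductive DerivList : Ctx → Lam → List Ty → Type
    | nil (u : Lam) : DerivList 0 u []
    | cons {Γ Γ' : Ctx} {u : Lam} {α : Ty} {as : List Ty} :
        Deriv Γ u α → DerivList Γ' u as → DerivList (Γ + Γ') u (α :: as)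
end

/-- Derivability in System R : `Γ ⊢_R t : α`. -/
def DerR (Γ : Ctx) (t : Lam) (α : Ty) : Prop := Nonempty (Deriv Γ t α)

noncomputable section
mutual
  /-- Size (number of rule applications) of a derivation. -/
  def Deriv.size : ∀ {Γ : Ctx} {t : Lam} {α : Ty}, Deriv Γ t α → ℕ
    | _, _, _, .ax _ _ => 1
    | _, _, _, .lam _ _ d _ => d.size + 1
    | _, _, _, .app d ds => d.size + ds.size + 1
  def DerivList.size : ∀ {Γ : Ctx} {u : Lam} {as : List Ty}, DerivList Γ u as → ℕ
    | _, _, _, .nil _ => 0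
    | _, _, _, .cons d ds => d.size + ds.size
end
end

mutual
  /-- The size `|α|` of a type. -/
  def tySize : Ty → ℕ
    | .atom _ => 1
    | .arr a α => tyAuxList a + tySize α + 1
  /-- The auxiliary size `aux(α)` of a type. -/
  def tyAux : Ty → ℕ
    | .atom _ => 0
    | .arr a α => tySizeList a + tyAux α + 1
  /-- `|a| = Σᵢ |αᵢ|` for a multiset `a = [α₁,…,α_n]`. -/
  def tySizeList : List Ty → ℕ
    | [] => 0
    | β :: bs => tySize β + tySizeList bs
  /-- `aux(a) = Σᵢ aux(αᵢ)`. -/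
  def tyAuxList : List Ty → ℕ
    | [] => 0
    | β :: bs => tyAux β + tyAuxList bs
end

/-- The type `a₁ … a_m α = (a₁, (a₂, … (a_m, α) …))`. -/
def tyOf (as : List (List Ty)) (α : Ty) : Ty := as.foldr Ty.arr α

-- auxiliary development
noncomputable def ctxMeasure (Γ : Ctx) : ℕ := Γ.sum fun _ m => (m.map tyAux).sum

lemma ctxMeasure_add (Γ Δ : Ctx) : ctxMeasure (Γ + Δ) = ctxMeasure Γ + ctxMeasure Δ := by
  unfold ctxMeasure
  exact Finsupp.sum_add_index' (fun _ => by simp) (fun _ m m' => by simp [Multiset.map_add])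

lemma ctxMeasure_zero : ctxMeasure 0 = 0 := by simp [ctxMeasure]

lemma map_tyAux_coe (a : List Ty) : ((↑a : Multiset Ty).map tyAux).sum = tyAuxList a := by
  induction a with
  | nil => simp [tyAuxList]
  | cons b bs ih =>
    rw [show ((↑(b :: bs) : Multiset Ty)) = b ::ₘ (↑bs : Multiset Ty) from rfl]
    simp only [Multiset.map_cons, Multiset.sum_cons, ih, tyAuxList]

lemma ctxMeasure_single (x : ℕ) (m : Multiset Ty) :
    ctxMeasure (Finsupp.single x m) = (m.map tyAux).sum := by
  unfold ctxMeasure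
  exact Finsupp.sum_single_index (by simp)

lemma tySize_pos (α : Ty) : 1 ≤ tySize α := by
  cases α <;> simp [tySize] <;> omega

lemma normal_app_left {a b : Lam} (h : ∀ u, ¬ Lam.Beta (.app a b) u) :
    ∀ u, ¬ Lam.Beta a u := fun u hu => h (.app u b) (Lam.Beta.appL b hu)

lemma normal_app_right {a b : Lam} (h : ∀ u, ¬ Lam.Beta (.app a b) u) :
    ∀ u, ¬ Lam.Beta b u := fun u hu => h (.app a u) (Lam.Beta.appR a hu)

lemma normal_app_notlam {a b : Lam} (h : ∀ u, ¬ Lam.Beta (.app a b) u) :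
    ∀ x w, a ≠ .lam x w := by
  rintro x w rfl
  exact h _ (Lam.Beta.beta x w b)

lemma normal_lam {x : ℕ} {t : Lam} (h : ∀ u, ¬ Lam.Beta (.lam x t) u) :
    ∀ u, ¬ Lam.Beta t u := fun u hu => h (.lam x u) (Lam.Beta.lam x hu)

mutual
theorem derivBound {Γ : Ctx} {v : Lam} {α : Ty} (d : Deriv Γ v α)
    (h : ∀ u, ¬ Lam.Beta v u) :
    d.size ≤ ctxMeasure Γ + tySize α ∧
      ((∀ x w, v ≠ .lam x w) → d.size + tyAux α ≤ ctxMeasure Γ + 1) := by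
  match d with
  | .ax x α =>
    constructor
    · have := tySize_pos α
      simp only [Deriv.size, ctxMeasure_single, Multiset.map_singleton,
        Multiset.sum_singleton]
      omega
    · intro _
      simp only [Deriv.size, ctxMeasure_single, Multiset.map_singleton,
        Multiset.sum_singleton]
      omega
  | .lam (Γ := Γ₀) x a d' hx =>
    have ih := derivBound d' (normal_lam h)
    constructor
    · have h1 := ih.1
      rw [ctxMeasure_add, ctxMeasure_single, map_tyAux_coe] at h1
      simp only [Deriv.size, tySize]
      omega
    · intro hne; exact absurd rfl (hne x _)
  | .app (Γ₀ := Γ₀) (Γ₁ := Γ₁) (as := as) d₀ ds =>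
    have hnl := normal_app_notlam h
    have ih₀ := (derivBound d₀ (normal_app_left h)).2 (by
      rintro x w rfl; exact hnl x w rfl)
    have ihs := listBound ds (normal_app_right h)
    rw [ctxMeasure_add]
    simp only [Deriv.size, tyAux] at *
    have hpos := tySize_pos α
    constructor
    · omega
    · intro _; omega
theorem listBound {Γ : Ctx} {u : Lam} {as : List Ty} (ds : DerivList Γ u as)
    (h : ∀ w, ¬ Lam.Beta u w) :
    ds.size ≤ ctxMeasure Γ + tySizeList as := by
  match ds with
  | .nil u => simp [DerivList.size, ctxMeasure_zero, tySizeList]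
  | .cons d ds' =>
    have ih := (derivBound d h).1
    have ihs := listBound ds' h
    rw [ctxMeasure_add]
    simp only [DerivList.size, tySizeList]
    omega
end

lemma coeM_eq (as : List (List Ty)) :
    (do let a ← as; pure (↑a : Multiset Ty)) = as.map Multiset.ofList := by
  induction as with
  | nil => rfl
  | cons a as ih =>
    show Multiset.ofList a :: (do let a ← as; pure (↑a : Multiset Ty)) = _
    rw [ih, List.map_cons]

lemma tyOf_bound (xs : List ℕ) (as : List (List Ty)) (α : Ty) :
    ctxMeasure (List.zipWith (fun x (a : List Ty) =>
        Finsupp.single x (Multiset.ofList a)) xs as).sum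
      + tySize α ≤ tySize (tyOf as α) := by
  induction as generalizing xs with
  | nil => simp [tyOf, ctxMeasure_zero]
  | cons a as' ih =>
    cases xs with
    | nil =>
      have h1 := ih (xs := ([] : List ℕ))
      simp only [List.zipWith_nil_left, List.sum_nil, ctxMeasure_zero, tyOf] at h1 ⊢
      simp only [List.foldr, tySize]
      omega
    | cons x xs' =>
      have h1 := ih (xs := xs')
      simp only [tyOf] at h1 ⊢
      rw [List.zipWith_cons_cons, List.sum_cons, ctxMeasure_add, ctxMeasure_single,
        map_tyAux_coe]
      simp only [List.foldr, tySize]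
      omega

/-- for a normal λ-term `v`, the size of any derivation of
`x₁:a₁,…,x_m:a_m ⊢_R v : α` is at most `|a₁ … a_m α|`. -/
theorem stmt15 (v : Lam) (hnorm : ∀ u, ¬ Lam.Beta v u)
    (xs : List ℕ) (hnd : xs.Nodup) (as : List (List Ty)) (α : Ty)
    (hlen : xs.length = as.length)
    (P : Deriv ((List.zipWith (fun x a => Finsupp.single x (↑a : Multiset Ty)) xs as).sum)
          v α) :
    P.size ≤ tySize (tyOf as α) := by
  have e : (List.zipWith (fun x a => Finsupp.single x (↑a : Multiset Ty)) xs as).sum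
      = (List.zipWith (fun x (a : List Ty) =>
          Finsupp.single x (Multiset.ofList a)) xs as).sum := by
    rw [coeM_eq, List.zipWith_map_right]
  calc P.size ≤ ctxMeasure _ + tySize α := (derivBound P hnorm).1
    _ = ctxMeasure (List.zipWith (fun x (a : List Ty) =>
          Finsupp.single x (Multiset.ofList a)) xs as).sum + tySize α := by rw [e]
    _ ≤ tySize (tyOf as α) := tyOf_bound xs as α
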